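/- Let G be a 4-connected finite simple graph with minimum degree δ, connectivity κ, and circumference c. Let S be a minimum cut-set of G and let H₁, H₂ be two distinct components of G∖S; set V₁ = V(H₁) ∪ S. Let C be a longest cycle in G which is a D₃-cycle, and let x₁x₂ be an edge of G∖C with x₁, x₂ ∈ V(H₁). Suppose Y = R ∪ R⁺ ∪ M⁺² ⊆ V₁, where R = N_C(x₁) ∪ N_C(x₂) and M = N_C(x₁) ∩ N_C(x₂). If V(H₂) ⊆ V(C), then c ≥ 4δ − κ − 2. -/

import Mathlib

namespace SimpleGraph

variable {V : Type*}

/-- `S` is a cut-set of `G`: deleting `S` disconnects the graph. -/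
def IsCutSet [Fintype V] (G : SimpleGraph V) (S : Finset V) : Prop :=
  ¬ (G.induce ((↑S : Set V)ᶜ)).Connected

/-- The vertex connectivity of `G`: the largest `k` such that `G` is `k`-connected,
i.e. `G` has more than `k` vertices and removing fewer than `k` vertices
always leaves a connected graph. -/
noncomputable def vertexConnectivity [Fintype V] (G : SimpleGraph V) : ℕ :=
  sSup {k | k < Fintype.card V ∧
    ∀ S : Finset V, S.card < k → (G.induce ((↑S : Set V)ᶜ)).Connected}

/-- `S` is a minimum cut-set of `G`: a cut-set whose cardinality equals
the connectivity of `G`. -/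
def IsMinCutSet [Fintype V] (G : SimpleGraph V) (S : Finset V) : Prop :=
  G.IsCutSet S ∧ S.card = G.vertexConnectivity

/-- The circumference of `G`: the length of a longest cycle (`0` if there is none). -/
noncomputable def circumference (G : SimpleGraph V) : ℕ :=
  sSup {n | ∃ (v : V) (C : G.Walk v v), C.IsCycle ∧ C.length = n}

/-- `C` is a longest cycle in `G`. -/
def IsLongestCycle {G : SimpleGraph V} {v : V} (C : G.Walk v v) : Prop :=
  C.IsCycle ∧ ∀ (w : V) (D : G.Walk w w), D.IsCycle → D.length ≤ C.length

/-- `C` is a dominating cycle: every edge of `G` has an endpoint on `C`. -/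
def IsDominatingCycle {G : SimpleGraph V} {v : V} (C : G.Walk v v) : Prop :=
  C.IsCycle ∧ ∀ a b : V, G.Adj a b → a ∈ C.support ∨ b ∈ C.support

/-- `C` is a `D₃`-cycle: every path of length at least 2 in `G` has a vertex
in common with `C`. -/
def IsD3Cycle {G : SimpleGraph V} {v : V} (C : G.Walk v v) : Prop :=
  C.IsCycle ∧ ∀ (a b : V) (P : G.Walk a b), P.IsPath → 2 ≤ P.length →
    ∃ z, z ∈ P.support ∧ z ∈ C.support

/-- The successor of a vertex `x` on the (oriented) cycle `C`
(and `x` itself if `x` does not lie on `C`). -/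
noncomputable def cycleSucc [DecidableEq V] {G : SimpleGraph V} {v : V}
    (C : G.Walk v v) (x : V) : V :=
  if h : x ∈ C.support.tail then C.support.tail.next x h else x

/-- The neighborhood of `x` on the cycle `C`, as a finset: `N(x) ∩ V(C)`. -/
def cycleNbhd [Fintype V] [DecidableEq V] {G : SimpleGraph V} [DecidableRel G.Adj]
    {v : V} (C : G.Walk v v) (x : V) : Finset V :=
  G.neighborFinset x ∩ C.support.toFinset

end SimpleGraph

/-!
Write `N₁, N₂` for `N_C(x₁), N_C(x₂)`. As `C` is a `D₃`-cycle, every neighbour of `x₁` other than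
`x₂` lies on `C`, so `δ ≤ |N₁| + 1`, and likewise `δ ≤ |N₂| + 1`. As `C` is longest, no `u ∈ R` has
`u⁺ ∈ R` and no `w ∈ M` has `w⁺² ∈ R`: otherwise replacing the segment `u u⁺` (resp. `w w⁺ w⁺²`)
of `C` by a detour through `x₁` and/or `x₂` gives a longer cycle. Since `u ↦ u⁺` is injective,
`w⁺² ∈ R⁺` would mean `w⁺ ∈ R`, so `R`, `R⁺`, `M⁺²` are pairwise disjoint and
`|Y| = 2|R| + |M| = |R| + |N₁| + |N₂| ≥ 3δ - 3`. A vertex of `H₂` has all its neighbours in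
`H₂ ∪ S`, so `|H₂| ≥ δ + 1 - κ`. Finally `Y ⊆ V₁` misses `H₂`, and both lie on `C`, so
`c ≥ |Y| + |H₂| ≥ 4δ - κ - 2`.
-/

namespace SimpleGraph

open Walk

variable {V : Type*} {G : SimpleGraph V}

lemma Walk.IsPath.isCycle_cons_concat {a u y : V} {q : G.Walk a u} (hq : q.IsPath)
    (hy : y ∉ q.support) (hau : a ≠ u) (h₁ : G.Adj u y) (h₂ : G.Adj y a) :
    (cons h₂ (q.concat h₁)).IsCycle := by
  refine (cons_isCycle_iff _ _).2 ⟨hq.concat hy h₁, fun he => ?_⟩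
  rw [edges_concat, List.concat_eq_append, List.mem_append, List.mem_singleton,
    Sym2.eq_iff] at he
  rcases he with he | ⟨rfl, -⟩ | ⟨-, rfl⟩
  · exact hy (q.fst_mem_support_of_mem_edges he)
  · exact hy q.end_mem_support
  · exact hau rfl

lemma Walk.IsCycle.length_le_circumference [Fintype V] {v : V} {C : G.Walk v v}
    (hC : C.IsCycle) : C.length ≤ G.circumference := by
  refine le_csSup ⟨Fintype.card V, ?_⟩ ⟨v, C, hC, rfl⟩
  rintro _ ⟨w, D, hD, rfl⟩
  simpa using hD.support_nodup.length_le_card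

lemma Walk.IsCycle.ncard_le_length [DecidableEq V] {v : V} {C : G.Walk v v} (hC : C.IsCycle)
    {T : Set V} (hT : T ⊆ {x | x ∈ C.support}) : T.ncard ≤ C.length := by
  have hTC : T ⊆ C.support.tail.toFinset := by
    intro x hx
    rw [Finset.mem_coe, List.mem_toFinset]
    rcases List.mem_cons.1 (C.cons_tail_support ▸ hT hx) with rfl | h
    exacts [C.end_mem_tail_support hC.not_nil, h]
  calc T.ncard ≤ C.support.tail.toFinset.card :=
        (Set.ncard_le_ncard hTC).trans_eq (Set.ncard_coe_finset _)
    _ ≤ C.support.tail.length := List.toFinset_card_le _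
    _ = C.length := by simp

lemma minDegree_lt_ncard_supp_add_card [Fintype V] [DecidableRel G.Adj] (S : Finset V)
    (H : (G.induce (↑S : Set V)ᶜ).ConnectedComponent) :
    G.minDegree < (Subtype.val '' H.supp).ncard + S.card := by
  obtain ⟨u, hu⟩ := H.exists_rep
  have hsub : insert (u : V) (G.neighborSet u) ⊆ Subtype.val '' H.supp ∪ ↑S := by
    rintro w (rfl | hw)
    · exact .inl ⟨u, hu, rfl⟩
    by_cases hwS : w ∈ S
    · exact .inr hwS
    · refine .inl ⟨⟨w, hwS⟩, hu ▸ ConnectedComponent.sound (Adj.reachable ?_), rfl⟩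
      simpa using hw.symm
  calc G.minDegree < G.degree u + 1 := Nat.lt_succ_of_le (G.minDegree_le_degree u)
    _ = (insert (u : V) (G.neighborSet u)).ncard := by
      rw [Set.ncard_insert_of_notMem G.notMem_neighborSet_self, ← card_neighborFinset_eq_degree,
        ← Set.ncard_coe_finset, coe_neighborFinset]
    _ ≤ _ := Set.ncard_le_ncard hsub
    _ ≤ _ := (Set.ncard_union_le _ _).trans (by rw [Set.ncard_coe_finset])

lemma disjoint_image_val_supp_union {S : Set V} {H₁ H₂ : (G.induce Sᶜ).ConnectedComponent}
    (hH : H₁ ≠ H₂) : Disjoint (Subtype.val '' H₂.supp) (Subtype.val '' H₁.supp ∪ S) :=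
  Set.disjoint_union_right.2
    ⟨(Set.disjoint_image_iff Subtype.val_injective).2
      ((G.induce Sᶜ).pairwise_disjoint_supp_connectedComponent hH.symm),
    disjoint_compl_left.mono_left (Subtype.coe_image_subset _ _)⟩

section cycleSucc

variable [DecidableEq V] {v : V} {C : G.Walk v v}

lemma cycleSucc_mem_support {x : V} (hx : x ∈ C.support) : cycleSucc C x ∈ C.support := by
  unfold cycleSucc
  split_ifs
  · exact List.mem_of_mem_tail (List.next_mem _ _ _)
  · exact hx

lemma cycleSucc_injective (hC : C.support.tail.Nodup) : Function.Injective (cycleSucc C) := by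
  have hmem : ∀ x, cycleSucc C x ∈ C.support.tail ↔ x ∈ C.support.tail := by
    intro x
    unfold cycleSucc
    split_ifs with h
    · simpa [h] using List.next_mem _ _ h
    · rfl
  intro a b hab
  by_cases ha : a ∈ C.support.tail
  · have hb : b ∈ C.support.tail := (hmem b).1 (hab ▸ (hmem a).2 ha)
    rw [← List.prev_next _ hC a ha, ← List.prev_next _ hC b hb]
    simp only [cycleSucc, dif_pos ha, dif_pos hb] at hab
    simp only [hab]
  · have hb : b ∉ C.support.tail := fun hb => ha ((hmem a).1 (hab ▸ (hmem b).2 hb))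
    simpa [cycleSucc, ha, hb] using hab

lemma cycleSucc_rotate (hC : C.support.tail.Nodup) {u : V} (hu : u ∈ C.support) :
    cycleSucc (C.rotate u hu) = cycleSucc C := by
  funext x
  have hrot := C.support_rotate u hu
  unfold cycleSucc
  by_cases hx : x ∈ C.support.tail
  · rw [dif_pos hx, dif_pos (hrot.mem_iff.2 hx), List.isRotated_next_eq hrot.symm hC hx]
  · rw [dif_neg hx, dif_neg (hrot.mem_iff.not.2 hx)]

lemma Walk.IsCycle.cycleSucc_getVert (hC : C.IsCycle) {i : ℕ} (hi : i < C.length) :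
    cycleSucc C (C.getVert i) = C.getVert (i + 1) := by
  -- `l` lists `C.getVert 1, …, C.getVert C.length`; its last entry is `v = C.getVert 0`.
  set l := C.support.tail
  have hlen : l.length = C.length := by simp [l]
  have hget : ∀ j (hj : j < l.length), l[j] = C.getVert (j + 1) := by
    intro j hj
    simp [l, List.getElem_tail, support_getElem_eq_getVert]
  obtain ⟨j, hj, hji, hsucc⟩ : ∃ j, ∃ hj : j < l.length,
      l[j] = C.getVert i ∧ l[(j + 1) % l.length]'(Nat.mod_lt _ (by omega)) = C.getVert (i + 1) := by
    rcases i with _ | i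
    · refine ⟨l.length - 1, by omega, ?_, ?_⟩
      · rw [hget, Nat.sub_add_cancel (by omega), hlen, getVert_length, getVert_zero]
      · simp only [Nat.sub_add_cancel (show 1 ≤ l.length by omega), Nat.mod_self]
        exact hget 0 (by omega)
    · refine ⟨i, by omega, hget i (by omega), ?_⟩
      simp only [Nat.mod_eq_of_lt (show i + 1 < l.length by omega)]
      exact hget _ _
  rw [← hji, ← hsucc, cycleSucc, dif_pos (List.getElem_mem hj),
    List.next_getElem _ hC.support_nodup]

lemma Walk.IsCycle.iterate_cycleSucc_start (hC : C.IsCycle) {k : ℕ} (hk : k ≤ C.length) :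
    (cycleSucc C)^[k] v = C.getVert k := by
  induction k with
  | zero => simp
  | succ k ih =>
    rw [Function.iterate_succ_apply', ih (by omega), hC.cycleSucc_getVert (by omega)]

lemma Walk.IsCycle.exists_isPath_iterate_cycleSucc (hC : C.IsCycle) {u : V} (hu : u ∈ C.support)
    {k : ℕ} (hk₀ : 0 < k) (hk : k ≤ C.length) :
    ∃ q : G.Walk ((cycleSucc C)^[k] u) u,
      q.IsPath ∧ q.length + k = C.length ∧ ∀ x ∈ q.support, x ∈ C.support := by
  set C' := C.rotate u hu
  have hC' : C'.IsCycle := hC.rotate hu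
  have hlen : C'.length = C.length := C.length_rotate u hu
  have hsucc : (cycleSucc C)^[k] u = C'.getVert k := by
    rw [← cycleSucc_rotate hC.support_nodup hu, hC'.iterate_cycleSucc_start (hlen ▸ hk)]
  refine ⟨(C'.drop k).copy hsucc.symm rfl, by simpa using hC'.isPath_drop hk₀, ?_, ?_⟩
  · simp only [length_copy, drop_length]
    omega
  · intro x hx
    simp only [support_copy, drop_support_eq_support_drop_min] at hx
    exact (C.mem_support_rotate_iff u hu).1 (List.mem_of_mem_drop hx)

end cycleSucc

namespace IsLongestCycle

variable {v : V} {C : G.Walk v v} (hC : IsLongestCycle C)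
include hC

lemma length_add_two_le {a u y : V} {q : G.Walk a u} (hq : q.IsPath) (hy : y ∉ q.support)
    (hau : a ≠ u) (h₁ : G.Adj u y) (h₂ : G.Adj y a) : q.length + 2 ≤ C.length := by
  simpa [Nat.succ_le_iff] using hC.2 _ _ (hq.isCycle_cons_concat hy hau h₁ h₂)

lemma length_add_three_le {a u y z : V} {q : G.Walk a u} (hq : q.IsPath)
    (hy : y ∉ q.support) (hz : z ∉ q.support)
    (h₁ : G.Adj u y) (hyz : G.Adj y z) (h₂ : G.Adj z a) : q.length + 3 ≤ C.length := by
  have hay : a ≠ y := fun h => hy (h ▸ q.start_mem_support)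
  simpa using hC.length_add_two_le (hq.concat hy h₁) (by simp [hz, hyz.ne']) hay hyz h₂

variable [DecidableEq V]

lemma not_adj_cycleSucc {y z u : V} (hy : y ∉ C.support) (hz : z ∉ C.support)
    (hyz : y = z ∨ G.Adj y z) (hu : u ∈ C.support) (h₁ : G.Adj u y) :
    ¬ G.Adj z (cycleSucc C u) := by
  intro h₂
  have h3 := hC.1.three_le_length
  obtain ⟨q, hq, hlen, hqC⟩ := hC.1.exists_isPath_iterate_cycleSucc hu one_pos (by omega)
  have hyq : y ∉ q.support := fun h => hy (hqC y h)
  rcases hyz with rfl | hyz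
  · have hne : cycleSucc C u ≠ u := fun h =>
      absurd (hq.nil_iff_eq.2 h) (by rw [← length_eq_zero_iff]; omega)
    have := hC.length_add_two_le hq hyq hne h₁ h₂
    omega
  · have := hC.length_add_three_le hq hyq (fun h => hz (hqC z h)) h₁ hyz h₂
    omega

lemma not_adj_cycleSucc_cycleSucc {y z w : V} (hy : y ∉ C.support) (hz : z ∉ C.support)
    (hyz : G.Adj y z) (hw : w ∈ C.support) (h₁ : G.Adj w y) :
    ¬ G.Adj z (cycleSucc C (cycleSucc C w)) := by
  intro h₂
  have h3 := hC.1.three_le_length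
  obtain ⟨q, hq, hlen, hqC⟩ := hC.1.exists_isPath_iterate_cycleSucc hw two_pos (by omega)
  have := hC.length_add_three_le hq (fun h => hy (hqC y h)) (fun h => hz (hqC z h)) h₁ hyz h₂
  omega

end IsLongestCycle

section EdgeOffCycle

variable [Fintype V] [DecidableEq V] [DecidableRel G.Adj] {v : V} {C : G.Walk v v}

@[simp]
lemma mem_cycleNbhd {x w : V} : w ∈ cycleNbhd C x ↔ G.Adj x w ∧ w ∈ C.support := by
  simp [cycleNbhd]

lemma IsD3Cycle.degree_le_card_cycleNbhd_add_one (hD : IsD3Cycle C) {x x' : V}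
    (hxx' : G.Adj x x') (hx : x ∉ C.support) (hx' : x' ∉ C.support) :
    G.degree x ≤ (cycleNbhd C x).card + 1 := by
  have hsub : G.neighborFinset x ⊆ insert x' (cycleNbhd C x) := by
    intro w hw
    rw [mem_neighborFinset] at hw
    rw [Finset.mem_insert, mem_cycleNbhd]
    by_cases hwx' : w = x'
    · exact .inl hwx'
    obtain ⟨z, hz, hzC⟩ := hD.2 _ _ (cons hxx'.symm (cons hw nil))
      (by simp [isPath_def, hxx'.ne', hw.ne, Ne.symm hwx']) (by simp)
    simp only [support_cons, support_nil, List.mem_cons, List.not_mem_nil, or_false] at hz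
    rcases hz with rfl | rfl | rfl
    exacts [absurd hzC hx', absurd hzC hx, .inr ⟨hw, hzC⟩]
  rw [← card_neighborFinset_eq_degree]
  exact (Finset.card_le_card hsub).trans (Finset.card_insert_le _ _)

namespace IsLongestCycle

variable (hC : IsLongestCycle C) {x₁ x₂ : V} (hadj : G.Adj x₁ x₂)
  (hx₁ : x₁ ∉ C.support) (hx₂ : x₂ ∉ C.support)
include hC hadj hx₁ hx₂

lemma disjoint_cycleNbhd_union_image_cycleSucc :
    Disjoint (cycleNbhd C x₁ ∪ cycleNbhd C x₂)
      ((cycleNbhd C x₁ ∪ cycleNbhd C x₂).image (cycleSucc C)) := by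
  rw [Finset.disjoint_right]
  intro _ hu' hu''
  obtain ⟨u, hu, rfl⟩ := Finset.mem_image.1 hu'
  simp only [Finset.mem_union, mem_cycleNbhd] at hu hu''
  obtain ⟨h₁, huC⟩ | ⟨h₁, huC⟩ := hu <;> obtain ⟨h₂, -⟩ | ⟨h₂, -⟩ := hu''
  exacts [hC.not_adj_cycleSucc hx₁ hx₁ (.inl rfl) huC h₁.symm h₂,
    hC.not_adj_cycleSucc hx₁ hx₂ (.inr hadj) huC h₁.symm h₂,
    hC.not_adj_cycleSucc hx₂ hx₁ (.inr hadj.symm) huC h₁.symm h₂,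
    hC.not_adj_cycleSucc hx₂ hx₂ (.inl rfl) huC h₁.symm h₂]

lemma disjoint_union_image_cycleSucc_image_cycleSucc_cycleSucc :
    Disjoint (cycleNbhd C x₁ ∪ cycleNbhd C x₂ ∪
        (cycleNbhd C x₁ ∪ cycleNbhd C x₂).image (cycleSucc C))
      ((cycleNbhd C x₁ ∩ cycleNbhd C x₂).image (cycleSucc C ∘ cycleSucc C)) := by
  rw [Finset.disjoint_right]
  intro _ hw' hw''
  obtain ⟨w, hw, rfl⟩ := Finset.mem_image.1 hw'
  simp only [Finset.mem_inter, mem_cycleNbhd] at hw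
  obtain ⟨⟨hw₁, hwC⟩, hw₂, -⟩ := hw
  rcases Finset.mem_union.1 hw'' with hR | hR'
  · simp only [Function.comp_apply, Finset.mem_union, mem_cycleNbhd] at hR
    obtain ⟨h, -⟩ | ⟨h, -⟩ := hR
    exacts [hC.not_adj_cycleSucc_cycleSucc hx₂ hx₁ hadj.symm hwC hw₂.symm h,
      hC.not_adj_cycleSucc_cycleSucc hx₁ hx₂ hadj hwC hw₁.symm h]
  · obtain ⟨u, hu, hsucc⟩ := Finset.mem_image.1 hR'
    have hu' : u = cycleSucc C w := cycleSucc_injective hC.1.support_nodup hsucc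
    refine Finset.disjoint_left.1 (hC.disjoint_cycleNbhd_union_image_cycleSucc hadj hx₁ hx₂)
      (hu' ▸ hu) (Finset.mem_image_of_mem _ ?_)
    simp [hw₁, hwC]

lemma card_union_image_cycleSucc_union_image_cycleSucc_cycleSucc :
    (cycleNbhd C x₁ ∪ cycleNbhd C x₂ ∪
        (cycleNbhd C x₁ ∪ cycleNbhd C x₂).image (cycleSucc C) ∪
        (cycleNbhd C x₁ ∩ cycleNbhd C x₂).image (cycleSucc C ∘ cycleSucc C)).card =
      (cycleNbhd C x₁).card + (cycleNbhd C x₂).card + (cycleNbhd C x₁ ∪ cycleNbhd C x₂).card := by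
  have hinj := cycleSucc_injective hC.1.support_nodup
  rw [Finset.card_union_of_disjoint
      (hC.disjoint_union_image_cycleSucc_image_cycleSucc_cycleSucc hadj hx₁ hx₂),
    Finset.card_union_of_disjoint (hC.disjoint_cycleNbhd_union_image_cycleSucc hadj hx₁ hx₂),
    Finset.card_image_of_injective _ hinj, Finset.card_image_of_injective _ (hinj.comp hinj)]
  have := Finset.card_union_add_card_inter (cycleNbhd C x₁) (cycleNbhd C x₂)
  omega

end IsLongestCycle

lemma coe_union_image_cycleSucc_union_image_subset_support (x₁ x₂ : V) :
    ↑(cycleNbhd C x₁ ∪ cycleNbhd C x₂ ∪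
        (cycleNbhd C x₁ ∪ cycleNbhd C x₂).image (cycleSucc C) ∪
        (cycleNbhd C x₁ ∩ cycleNbhd C x₂).image (cycleSucc C ∘ cycleSucc C)) ⊆
      {x | x ∈ C.support} := by
  intro x hx
  simp only [Finset.coe_union, Finset.coe_image, Set.mem_union, Set.mem_image,
    Finset.mem_coe, Finset.mem_inter, mem_cycleNbhd] at hx
  rcases hx with ((⟨-, h⟩ | ⟨-, h⟩) | ⟨u, (⟨-, h⟩ | ⟨-, h⟩), rfl⟩) | ⟨u, ⟨⟨-, h⟩, -⟩, rfl⟩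
  exacts [h, h, cycleSucc_mem_support h, cycleSucc_mem_support h,
    cycleSucc_mem_support (cycleSucc_mem_support h)]

end EdgeOffCycle

end SimpleGraph

open SimpleGraph in
theorem statement_10_general {V : Type*} [Fintype V] [DecidableEq V]
    (G : SimpleGraph V) [DecidableRel G.Adj]
    (S : Finset V) (hS : G.IsMinCutSet S)
    (H₁ H₂ : (G.induce ((↑S : Set V)ᶜ)).ConnectedComponent) (hH : H₁ ≠ H₂)
    (V₁ : Set V) (hV₁ : V₁ = (Subtype.val '' H₁.supp) ∪ ↑S)
    {v : V} (C : G.Walk v v) (hC : IsLongestCycle C) (hD3 : IsD3Cycle C)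
    (x₁ x₂ : V) (hadj : G.Adj x₁ x₂) (hx₁ : x₁ ∉ C.support) (hx₂ : x₂ ∉ C.support)
    (R M Y : Finset V)
    (hR : R = cycleNbhd C x₁ ∪ cycleNbhd C x₂)
    (hM : M = cycleNbhd C x₁ ∩ cycleNbhd C x₂)
    (hY : Y = R ∪ R.image (cycleSucc C) ∪ M.image (cycleSucc C ∘ cycleSucc C))
    (hYV₁ : (↑Y : Set V) ⊆ V₁)
    (hH₂C : Subtype.val '' H₂.supp ⊆ {z | z ∈ C.support}) :
    4 * G.minDegree ≤ G.circumference + G.vertexConnectivity + 2 := by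
  subst hR hM hV₁
  have hδ₁ := (G.minDegree_le_degree x₁).trans
    (hD3.degree_le_card_cycleNbhd_add_one hadj hx₁ hx₂)
  have hδ₂ := (G.minDegree_le_degree x₂).trans
    (hD3.degree_le_card_cycleNbhd_add_one hadj.symm hx₂ hx₁)
  have hδR := hδ₁.trans (Nat.add_le_add_right
    (Finset.card_le_card (Finset.subset_union_left (s₂ := cycleNbhd C x₂))) 1)
  have hYcard := hY ▸ hC.card_union_image_cycleSucc_union_image_cycleSucc_cycleSucc hadj hx₁ hx₂
  have hH₂ := minDegree_lt_ncard_supp_add_card S H₂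
  have hCcount := hC.1.ncard_le_length
    (Set.union_subset (hY ▸ coe_union_image_cycleSucc_union_image_subset_support x₁ x₂) hH₂C)
  rw [Set.ncard_union_eq ((disjoint_image_val_supp_union hH).symm.mono_left hYV₁),
    Set.ncard_coe_finset] at hCcount
  have hc := hC.1.length_le_circumference
  have hκ := hS.2
  omega

open SimpleGraph in
/-- If `Y ⊆ V₁` and `V(H₂) ⊆ V(C)`, then `c ≥ 4δ - κ - 2`. -/
theorem statement_10 {V : Type*} [Fintype V] [DecidableEq V]
    (G : SimpleGraph V) [DecidableRel G.Adj]
    (h4 : 4 ≤ G.vertexConnectivity)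
    (S : Finset V) (hS : G.IsMinCutSet S)
    (H₁ H₂ : (G.induce ((↑S : Set V)ᶜ)).ConnectedComponent) (hH : H₁ ≠ H₂)
    (V₁ : Set V) (hV₁ : V₁ = (Subtype.val '' H₁.supp) ∪ ↑S)
    {v : V} (C : G.Walk v v) (hC : IsLongestCycle C) (hD3 : IsD3Cycle C)
    (x₁ x₂ : V) (hadj : G.Adj x₁ x₂) (hx₁ : x₁ ∉ C.support) (hx₂ : x₂ ∉ C.support)
    (hx₁H : x₁ ∈ Subtype.val '' H₁.supp) (hx₂H : x₂ ∈ Subtype.val '' H₁.supp)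
    (R M Y : Finset V)
    (hR : R = cycleNbhd C x₁ ∪ cycleNbhd C x₂)
    (hM : M = cycleNbhd C x₁ ∩ cycleNbhd C x₂)
    (hY : Y = R ∪ R.image (cycleSucc C) ∪ M.image (cycleSucc C ∘ cycleSucc C))
    (hYV₁ : (↑Y : Set V) ⊆ V₁)
    (hH₂C : Subtype.val '' H₂.supp ⊆ {z | z ∈ C.support}) :
    4 * G.minDegree ≤ G.circumference + G.vertexConnectivity + 2 :=
  statement_10_general G S hS H₁ H₂ hH V₁ hV₁ C hC hD3 x₁ x₂ hadj hx₁ hx₂ R M Y hR hM hY hYV₁ hH₂C
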